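/- arXiv:1912.00022 — 10 statements merged into one kernel-verified Lean document; each statement's English description precedes it below -/
import Mathlib

section
/- Let A be a Banach algebra, U a Banach A-bimodule, and let D : T(A,U) → T(A,U) be a linear map of the form D((a,u)) = (δ₁(a)+τ₁(u), δ₂(a)+τ₂(u)), where δ₁ : A → A, δ₂ : A → U, τ₁ : U → A and τ₂ : U → U are linear maps. If D is a derivation, then: δ₁ : A → A and δ₂ : A → U are derivations; τ₂ satisfies τ₂(a·u) = a·τ₂(u) + δ₂(a)·u and τ₂(u·a) = τ₂(u)·a + u·δ₂(a) for all a ∈ A, u ∈ U; and τ₁ satisfies τ₁(a·u) = a·τ₁(u), τ₁(u·a) = τ₁(u)·a and u·τ₁(v) + τ₁(u)·v = 0 for all a ∈ A, u, v ∈ U. -/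
/-!
`A` is a (possibly non-unital) Banach algebra over `ℂ`, and `U` is a Banach `A`-bimodule whose
left and right actions are given by the continuous bilinear maps `l` and `r`.
The module extension (trivial extension) Banach algebra `T(A,U)` is `A × U` (with the ℓ¹-norm,
whose topology is the product topology) and multiplication `trivMul l r`.

Note: in the identity for `τ₂` the paper writes `δ₂(a)·u`, which is ill-typed in the bimodule
setting (`δ₂ a ∈ U`); the mathematically forced reading is `δ₁(a)·u`, which is used here.
-/

/-- Multiplication of the module extension (trivial extension) algebra `T(A,U) = A × U`:
`(a,u)(b,v) = (ab, a·v + u·b)`. -/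
noncomputable def trivMul {A U : Type*} [NonUnitalNormedRing A] [NormedSpace ℂ A]
    [NormedAddCommGroup U] [NormedSpace ℂ U]
    (l : A →L[ℂ] U →L[ℂ] U) (r : U →L[ℂ] A →L[ℂ] U) (x y : A × U) : A × U :=
  (x.1 * y.1, l x.1 y.2 + r x.2 y.1)

/-! Every identity is one component of the Leibniz rule `D(xy) = x D(y) + D(x) y`, evaluated on
the four kinds of products `(a,0)(b,0)`, `(a,0)(0,u)`, `(0,u)(a,0)` and `(0,u)(0,v)`. -/

namespace TrivMulDerivation

variable {A U : Type*} [NonUnitalNormedRing A] [NormedSpace ℂ A]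
  [NormedAddCommGroup U] [NormedSpace ℂ U]
  {l : A →L[ℂ] U →L[ℂ] U} {r : U →L[ℂ] A →L[ℂ] U}
  {δ₁ : A →ₗ[ℂ] A} {δ₂ : A →ₗ[ℂ] U} {τ₁ : U →ₗ[ℂ] A} {τ₂ : U →ₗ[ℂ] U}
  {D : (A × U) →ₗ[ℂ] (A × U)}
  (hD : ∀ (a : A) (u : U), D (a, u) = (δ₁ a + τ₁ u, δ₂ a + τ₂ u))
  (hder : ∀ x y : A × U, D (trivMul l r x y) = trivMul l r x (D y) + trivMul l r (D x) y)
include hD hder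

theorem leibniz_mk (a b : A) (u v : U) :
    δ₁ (a * b) + τ₁ (l a v + r u b) = a * (δ₁ b + τ₁ v) + (δ₁ a + τ₁ u) * b ∧
      δ₂ (a * b) + τ₂ (l a v + r u b) =
        l a (δ₂ b + τ₂ v) + r u (δ₁ b + τ₁ v) + (l (δ₁ a + τ₁ u) v + r (δ₂ a + τ₂ u) b) := by
  simpa only [trivMul, hD, Prod.mk_add_mk, Prod.mk.injEq] using hder (a, u) (b, v)

theorem map_mul (a b : A) :
    δ₁ (a * b) = a * δ₁ b + δ₁ a * b ∧ δ₂ (a * b) = l a (δ₂ b) + r (δ₂ a) b := by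
  simpa using leibniz_mk hD hder a b 0 0

theorem map_left (a : A) (u : U) :
    τ₁ (l a u) = a * τ₁ u ∧ τ₂ (l a u) = l a (τ₂ u) + l (δ₁ a) u := by
  simpa using leibniz_mk hD hder a 0 0 u

theorem map_right (u : U) (a : A) :
    τ₁ (r u a) = τ₁ u * a ∧ τ₂ (r u a) = r (τ₂ u) a + r u (δ₁ a) := by
  simpa [add_comm] using leibniz_mk hD hder 0 a u 0

theorem right_add_left_eq_zero (u v : U) : r u (τ₁ v) + l (τ₁ u) v = 0 := by
  simpa [eq_comm] using (leibniz_mk hD hder 0 0 u v).2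

end TrivMulDerivation

theorem stmt0_general
    {A U : Type*}
    [NonUnitalNormedRing A] [NormedSpace ℂ A]
    [NormedAddCommGroup U] [NormedSpace ℂ U]
    -- `U` is a Banach `A`-bimodule:
    (l : A →L[ℂ] U →L[ℂ] U) (r : U →L[ℂ] A →L[ℂ] U)
    -- the components of `D`:
    (δ₁ : A →ₗ[ℂ] A) (δ₂ : A →ₗ[ℂ] U) (τ₁ : U →ₗ[ℂ] A) (τ₂ : U →ₗ[ℂ] U)
    (D : (A × U) →ₗ[ℂ] (A × U))
    (hD : ∀ (a : A) (u : U), D (a, u) = (δ₁ a + τ₁ u, δ₂ a + τ₂ u))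
    -- `D` is a derivation on `T(A,U)`:
    (hder : ∀ x y : A × U, D (trivMul l r x y) = trivMul l r x (D y) + trivMul l r (D x) y) :
    -- `δ₁ : A → A` is a derivation
    (∀ a b : A, δ₁ (a * b) = a * δ₁ b + δ₁ a * b) ∧
    -- `δ₂ : A → U` is a derivation
    (∀ a b : A, δ₂ (a * b) = l a (δ₂ b) + r (δ₂ a) b) ∧
    -- `τ₂(a·u) = a·τ₂(u) + δ₁(a)·u`
    (∀ (a : A) (u : U), τ₂ (l a u) = l a (τ₂ u) + l (δ₁ a) u) ∧
    -- `τ₂(u·a) = τ₂(u)·a + u·δ₁(a)`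
    (∀ (a : A) (u : U), τ₂ (r u a) = r (τ₂ u) a + r u (δ₁ a)) ∧
    -- `τ₁` is an `A`-bimodule homomorphism
    (∀ (a : A) (u : U), τ₁ (l a u) = a * τ₁ u) ∧
    (∀ (a : A) (u : U), τ₁ (r u a) = τ₁ u * a) ∧
    -- `u·τ₁(v) + τ₁(u)·v = 0`
    (∀ u v : U, r u (τ₁ v) + l (τ₁ u) v = 0) :=
  ⟨fun a b => (TrivMulDerivation.map_mul hD hder a b).1,
    fun a b => (TrivMulDerivation.map_mul hD hder a b).2,
    fun a u => (TrivMulDerivation.map_left hD hder a u).2,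
    fun a u => (TrivMulDerivation.map_right hD hder u a).2,
    fun a u => (TrivMulDerivation.map_left hD hder a u).1,
    fun a u => (TrivMulDerivation.map_right hD hder u a).1,
    TrivMulDerivation.right_add_left_eq_zero hD hder⟩

theorem stmt0
    {A U : Type*}
    [NonUnitalNormedRing A] [NormedSpace ℂ A] [IsScalarTower ℂ A A] [SMulCommClass ℂ A A]
    [CompleteSpace A]
    [NormedAddCommGroup U] [NormedSpace ℂ U] [CompleteSpace U]
    -- `U` is a Banach `A`-bimodule:
    (l : A →L[ℂ] U →L[ℂ] U) (r : U →L[ℂ] A →L[ℂ] U)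
    (hl : ∀ (a b : A) (u : U), l (a * b) u = l a (l b u))
    (hr : ∀ (u : U) (a b : A), r u (a * b) = r (r u a) b)
    (hlr : ∀ (a : A) (u : U) (b : A), r (l a u) b = l a (r u b))
    -- the components of `D`:
    (δ₁ : A →ₗ[ℂ] A) (δ₂ : A →ₗ[ℂ] U) (τ₁ : U →ₗ[ℂ] A) (τ₂ : U →ₗ[ℂ] U)
    (D : (A × U) →ₗ[ℂ] (A × U))
    (hD : ∀ (a : A) (u : U), D (a, u) = (δ₁ a + τ₁ u, δ₂ a + τ₂ u))
    -- `D` is a derivation on `T(A,U)`: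
    (hder : ∀ x y : A × U, D (trivMul l r x y) = trivMul l r x (D y) + trivMul l r (D x) y) :
    -- `δ₁ : A → A` is a derivation
    (∀ a b : A, δ₁ (a * b) = a * δ₁ b + δ₁ a * b) ∧
    -- `δ₂ : A → U` is a derivation
    (∀ a b : A, δ₂ (a * b) = l a (δ₂ b) + r (δ₂ a) b) ∧
    -- `τ₂(a·u) = a·τ₂(u) + δ₁(a)·u`
    (∀ (a : A) (u : U), τ₂ (l a u) = l a (τ₂ u) + l (δ₁ a) u) ∧
    -- `τ₂(u·a) = τ₂(u)·a + u·δ₁(a)`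
    (∀ (a : A) (u : U), τ₂ (r u a) = r (τ₂ u) a + r u (δ₁ a)) ∧
    -- `τ₁` is an `A`-bimodule homomorphism
    (∀ (a : A) (u : U), τ₁ (l a u) = a * τ₁ u) ∧
    (∀ (a : A) (u : U), τ₁ (r u a) = τ₁ u * a) ∧
    -- `u·τ₁(v) + τ₁(u)·v = 0`
    (∀ u v : U, r u (τ₁ v) + l (τ₁ u) v = 0) :=
  stmt0_general l r δ₁ δ₂ τ₁ τ₂ D hD hder
end

section
/- Let A be a Banach algebra, U a Banach A-bimodule, and let δ₁ : A → A, δ₂ : A → U, τ₁ : U → A, τ₂ : U → U be linear maps such that: δ₁ and δ₂ are derivations; τ₂(a·u) = a·τ₂(u) + δ₂(a)·u and τ₂(u·a) = τ₂(u)·a + u·δ₂(a) for all a ∈ A, u ∈ U; τ₁(a·u) = a·τ₁(u), τ₁(u·a) = τ₁(u)·a, and u·τ₁(v) + τ₁(u)·v = 0 for all a ∈ A, u, v ∈ U. Then the linear map D : T(A,U) → T(A,U) defined by D((a,u)) = (δ₁(a)+τ₁(u), δ₂(a)+τ₂(u)) is a derivation on T(A,U). -/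
namespace ModuleExtension

variable {𝕜 A U : Type*} [NontriviallyNormedField 𝕜] [NonUnitalNormedRing A] [NormedSpace 𝕜 A]
  [NormedAddCommGroup U] [NormedSpace 𝕜 U]
  (l : A →L[𝕜] U →L[𝕜] U) (r : U →L[𝕜] A →L[𝕜] U)

theorem fst_leibniz (δ₁ : A →ₗ[𝕜] A) (τ₁ : U →ₗ[𝕜] A)
    (hδ₁ : ∀ a b : A, δ₁ (a * b) = a * δ₁ b + δ₁ a * b)
    (hτ₁l : ∀ (a : A) (u : U), τ₁ (l a u) = a * τ₁ u)
    (hτ₁r : ∀ (a : A) (u : U), τ₁ (r u a) = τ₁ u * a) (a b : A) (u v : U) :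
    δ₁ (a * b) + τ₁ (l a v + r u b) = a * (δ₁ b + τ₁ v) + (δ₁ a + τ₁ u) * b := by
  rw [map_add, hδ₁, hτ₁l, hτ₁r, mul_add, add_mul]
  abel

/-- The cross terms `u·δ₁(b)` and `δ₁(a)·v` of the right-hand side come from `τ₂`, while the
cross terms `u·τ₁(v)` and `τ₁(u)·v` cancel. -/
theorem snd_leibniz (δ₁ : A →ₗ[𝕜] A) (δ₂ : A →ₗ[𝕜] U) (τ₁ : U →ₗ[𝕜] A) (τ₂ : U →ₗ[𝕜] U)
    (hδ₂ : ∀ a b : A, δ₂ (a * b) = l a (δ₂ b) + r (δ₂ a) b)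
    (hτ₂l : ∀ (a : A) (u : U), τ₂ (l a u) = l a (τ₂ u) + l (δ₁ a) u)
    (hτ₂r : ∀ (a : A) (u : U), τ₂ (r u a) = r (τ₂ u) a + r u (δ₁ a))
    (hτ₁0 : ∀ u v : U, r u (τ₁ v) + l (τ₁ u) v = 0) (a b : A) (u v : U) :
    δ₂ (a * b) + τ₂ (l a v + r u b) =
      l a (δ₂ b + τ₂ v) + r u (δ₁ b + τ₁ v) + (l (δ₁ a + τ₁ u) v + r (δ₂ a + τ₂ u) b) := by
  have hcancel : l (τ₁ u) v = -r u (τ₁ v) := eq_neg_of_add_eq_zero_right (hτ₁0 u v)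
  simp only [map_add, add_apply, hδ₂, hτ₂l, hτ₂r, hcancel]
  abel

end ModuleExtension

theorem stmt1_general
    {A U : Type*}
    [NonUnitalNormedRing A] [NormedSpace ℂ A]
    [NormedAddCommGroup U] [NormedSpace ℂ U]
    (l : A →L[ℂ] U →L[ℂ] U) (r : U →L[ℂ] A →L[ℂ] U)
    (δ₁ : A →ₗ[ℂ] A) (δ₂ : A →ₗ[ℂ] U) (τ₁ : U →ₗ[ℂ] A) (τ₂ : U →ₗ[ℂ] U)
    -- `δ₁` and `δ₂` are derivations:
    (hδ₁ : ∀ a b : A, δ₁ (a * b) = a * δ₁ b + δ₁ a * b)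
    (hδ₂ : ∀ a b : A, δ₂ (a * b) = l a (δ₂ b) + r (δ₂ a) b)
    -- `τ₂(a·u) = a·τ₂(u) + δ₁(a)·u` and `τ₂(u·a) = τ₂(u)·a + u·δ₁(a)`
    -- (the paper writes `δ₂(a)·u`, which is ill-typed; `δ₁` is the forced reading):
    (hτ₂l : ∀ (a : A) (u : U), τ₂ (l a u) = l a (τ₂ u) + l (δ₁ a) u)
    (hτ₂r : ∀ (a : A) (u : U), τ₂ (r u a) = r (τ₂ u) a + r u (δ₁ a))
    -- `τ₁` is an `A`-bimodule homomorphism with `u·τ₁(v) + τ₁(u)·v = 0`: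
    (hτ₁l : ∀ (a : A) (u : U), τ₁ (l a u) = a * τ₁ u)
    (hτ₁r : ∀ (a : A) (u : U), τ₁ (r u a) = τ₁ u * a)
    (hτ₁0 : ∀ u v : U, r u (τ₁ v) + l (τ₁ u) v = 0)
    -- the linear map `D((a,u)) = (δ₁(a)+τ₁(u), δ₂(a)+τ₂(u))`:
    (D : (A × U) →ₗ[ℂ] (A × U))
    (hD : ∀ (a : A) (u : U), D (a, u) = (δ₁ a + τ₁ u, δ₂ a + τ₂ u)) :
    -- `D` is a derivation on `T(A,U)`:
    ∀ x y : A × U, D (trivMul l r x y) = trivMul l r x (D y) + trivMul l r (D x) y := by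
  rintro ⟨a, u⟩ ⟨b, v⟩
  simp only [trivMul, hD, Prod.mk_add_mk]
  rw [ModuleExtension.fst_leibniz l r δ₁ τ₁ hδ₁ hτ₁l hτ₁r,
    ModuleExtension.snd_leibniz l r δ₁ δ₂ τ₁ τ₂ hδ₂ hτ₂l hτ₂r hτ₁0]

theorem stmt1
    {A U : Type*}
    [NonUnitalNormedRing A] [NormedSpace ℂ A] [IsScalarTower ℂ A A] [SMulCommClass ℂ A A]
    [CompleteSpace A]
    [NormedAddCommGroup U] [NormedSpace ℂ U] [CompleteSpace U]
    (l : A →L[ℂ] U →L[ℂ] U) (r : U →L[ℂ] A →L[ℂ] U)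
    (hl : ∀ (a b : A) (u : U), l (a * b) u = l a (l b u))
    (hr : ∀ (u : U) (a b : A), r u (a * b) = r (r u a) b)
    (hlr : ∀ (a : A) (u : U) (b : A), r (l a u) b = l a (r u b))
    (δ₁ : A →ₗ[ℂ] A) (δ₂ : A →ₗ[ℂ] U) (τ₁ : U →ₗ[ℂ] A) (τ₂ : U →ₗ[ℂ] U)
    -- `δ₁` and `δ₂` are derivations:
    (hδ₁ : ∀ a b : A, δ₁ (a * b) = a * δ₁ b + δ₁ a * b)
    (hδ₂ : ∀ a b : A, δ₂ (a * b) = l a (δ₂ b) + r (δ₂ a) b)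
    -- `τ₂(a·u) = a·τ₂(u) + δ₁(a)·u` and `τ₂(u·a) = τ₂(u)·a + u·δ₁(a)`
    -- (the paper writes `δ₂(a)·u`, which is ill-typed; `δ₁` is the forced reading):
    (hτ₂l : ∀ (a : A) (u : U), τ₂ (l a u) = l a (τ₂ u) + l (δ₁ a) u)
    (hτ₂r : ∀ (a : A) (u : U), τ₂ (r u a) = r (τ₂ u) a + r u (δ₁ a))
    -- `τ₁` is an `A`-bimodule homomorphism with `u·τ₁(v) + τ₁(u)·v = 0`:
    (hτ₁l : ∀ (a : A) (u : U), τ₁ (l a u) = a * τ₁ u)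
    (hτ₁r : ∀ (a : A) (u : U), τ₁ (r u a) = τ₁ u * a)
    (hτ₁0 : ∀ u v : U, r u (τ₁ v) + l (τ₁ u) v = 0)
    -- the linear map `D((a,u)) = (δ₁(a)+τ₁(u), δ₂(a)+τ₂(u))`:
    (D : (A × U) →ₗ[ℂ] (A × U))
    (hD : ∀ (a : A) (u : U), D (a, u) = (δ₁ a + τ₁ u, δ₂ a + τ₂ u)) :
    -- `D` is a derivation on `T(A,U)`:
    ∀ x y : A × U, D (trivMul l r x y) = trivMul l r x (D y) + trivMul l r (D x) y :=
  stmt1_general l r δ₁ δ₂ τ₁ τ₂ hδ₁ hδ₂ hτ₂l hτ₂r hτ₁l hτ₁r hτ₁0 D hD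
end

section
/- Let A be a Banach algebra, U a Banach A-bimodule, and let D : T(A,U) → T(A,U) be a derivation written as D((a,u)) = (δ₁(a)+τ₁(u), δ₂(a)+τ₂(u)) with δ₁ : A → A, δ₂ : A → U, τ₁ : U → A, τ₂ : U → U linear. Then D = D₁ + D₂ where the maps D₁((a,u)) = (δ₁(a)+τ₁(u), τ₂(u)) and D₂((a,u)) = (0, δ₂(a)) are themselves derivations on T(A,U). -/
/-!
The `A → U` corner `δ₂` of a derivation `D` of `T(A,U)` is already a derivation, as one sees by
evaluating the Leibniz rule for `D` on `(a,0)(b,0) = (ab,0)`. Hence `D₂ = (0, δ₂)` is a derivation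
of `T(A,U)`, and so is `D₁ = D - D₂`, derivations being closed under differences.
-/

def IsDerivationFor {X : Type*} [Add X] (μ : X → X → X) (D : X → X) : Prop :=
  ∀ x y, D (μ x y) = μ x (D y) + μ (D x) y

theorem IsDerivationFor.sub {X : Type*} [AddCommGroup X] {μ : X → X → X}
    (hμl : ∀ x y z, μ (x - y) z = μ x z - μ y z) (hμr : ∀ x y z, μ x (y - z) = μ x y - μ x z)
    {D E : X → X} (hD : IsDerivationFor μ D) (hE : IsDerivationFor μ E) :
    IsDerivationFor μ (D - E) := by
  intro x y
  simp only [Pi.sub_apply, hD x y, hE x y, hμl, hμr]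
  abel

section TrivMul

variable {A U : Type*} [NonUnitalNormedRing A] [NormedSpace ℂ A]
  [NormedAddCommGroup U] [NormedSpace ℂ U] (l : A →L[ℂ] U →L[ℂ] U) (r : U →L[ℂ] A →L[ℂ] U)

theorem trivMul_sub_left (x y z : A × U) :
    trivMul l r (x - y) z = trivMul l r x z - trivMul l r y z := by
  simp only [trivMul, Prod.fst_sub, Prod.snd_sub, sub_mul, map_sub,
    sub_apply, Prod.mk_sub_mk]
  congr 1
  abel

theorem trivMul_sub_right (x y z : A × U) :
    trivMul l r x (y - z) = trivMul l r x y - trivMul l r x z := by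
  simp only [trivMul, Prod.fst_sub, Prod.snd_sub, mul_sub, map_sub, Prod.mk_sub_mk]
  congr 1
  abel

theorem IsDerivationFor.trivMul_snd_inl {D : A × U → A × U}
    (hD : IsDerivationFor (trivMul l r) D) :
    IsDerivationFor (trivMul l r) (fun p => ((0 : A), (D (p.1, 0)).2)) := by
  rintro ⟨a, u⟩ ⟨b, v⟩
  have h := congrArg Prod.snd (hD (a, 0) (b, 0))
  simp only [trivMul, map_zero, zero_apply, add_zero, zero_add] at h
  simp [trivMul, h]

end TrivMul

theorem stmt2_general
    {A U : Type*}
    [NonUnitalNormedRing A] [NormedSpace ℂ A]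
    [NormedAddCommGroup U] [NormedSpace ℂ U]
    (l : A →L[ℂ] U →L[ℂ] U) (r : U →L[ℂ] A →L[ℂ] U)
    (δ₁ : A →ₗ[ℂ] A) (δ₂ : A →ₗ[ℂ] U) (τ₁ : U →ₗ[ℂ] A) (τ₂ : U →ₗ[ℂ] U)
    (D : (A × U) →ₗ[ℂ] (A × U))
    (hD : ∀ (a : A) (u : U), D (a, u) = (δ₁ a + τ₁ u, δ₂ a + τ₂ u))
    -- `D` is a derivation on `T(A,U)`:
    (hder : ∀ x y : A × U, D (trivMul l r x y) = trivMul l r x (D y) + trivMul l r (D x) y) :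
    -- `D₁((a,u)) = (δ₁(a)+τ₁(u), τ₂(u))` is a derivation on `T(A,U)`,
    (∀ x y : A × U,
        (fun p : A × U => ((δ₁ p.1 + τ₁ p.2, τ₂ p.2) : A × U)) (trivMul l r x y)
          = trivMul l r x ((fun p : A × U => ((δ₁ p.1 + τ₁ p.2, τ₂ p.2) : A × U)) y)
            + trivMul l r ((fun p : A × U => ((δ₁ p.1 + τ₁ p.2, τ₂ p.2) : A × U)) x) y) ∧
    -- `D₂((a,u)) = (0, δ₂(a))` is a derivation on `T(A,U)`,
    (∀ x y : A × U,
        (fun p : A × U => ((0, δ₂ p.1) : A × U)) (trivMul l r x y)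
          = trivMul l r x ((fun p : A × U => ((0, δ₂ p.1) : A × U)) y)
            + trivMul l r ((fun p : A × U => ((0, δ₂ p.1) : A × U)) x) y) ∧
    -- and `D = D₁ + D₂`:
    (∀ p : A × U, D p = ((δ₁ p.1 + τ₁ p.2, τ₂ p.2) : A × U) + ((0, δ₂ p.1) : A × U)) := by
  have hD₂_eq : (fun p : A × U => ((0 : A), (D (p.1, 0)).2)) = fun p => (0, δ₂ p.1) := by
    funext p
    simp [hD]
  have hD₁_eq : (⇑D - fun p : A × U => ((0 : A), δ₂ p.1)) =
      fun p => (δ₁ p.1 + τ₁ p.2, τ₂ p.2) := by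
    funext p
    simp [hD]
  have hD₂ : IsDerivationFor (trivMul l r) fun p : A × U => ((0 : A), δ₂ p.1) :=
    hD₂_eq ▸ IsDerivationFor.trivMul_snd_inl l r hder
  have hD₁ : IsDerivationFor (trivMul l r) fun p : A × U => (δ₁ p.1 + τ₁ p.2, τ₂ p.2) :=
    hD₁_eq ▸ IsDerivationFor.sub (trivMul_sub_left l r) (trivMul_sub_right l r) hder hD₂
  refine ⟨hD₁, hD₂, fun p => ?_⟩
  rw [← sub_eq_iff_eq_add]
  exact congrFun hD₁_eq p

theorem stmt2
    {A U : Type*}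
    [NonUnitalNormedRing A] [NormedSpace ℂ A] [IsScalarTower ℂ A A] [SMulCommClass ℂ A A]
    [CompleteSpace A]
    [NormedAddCommGroup U] [NormedSpace ℂ U] [CompleteSpace U]
    (l : A →L[ℂ] U →L[ℂ] U) (r : U →L[ℂ] A →L[ℂ] U)
    (hl : ∀ (a b : A) (u : U), l (a * b) u = l a (l b u))
    (hr : ∀ (u : U) (a b : A), r u (a * b) = r (r u a) b)
    (hlr : ∀ (a : A) (u : U) (b : A), r (l a u) b = l a (r u b))
    (δ₁ : A →ₗ[ℂ] A) (δ₂ : A →ₗ[ℂ] U) (τ₁ : U →ₗ[ℂ] A) (τ₂ : U →ₗ[ℂ] U)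
    (D : (A × U) →ₗ[ℂ] (A × U))
    (hD : ∀ (a : A) (u : U), D (a, u) = (δ₁ a + τ₁ u, δ₂ a + τ₂ u))
    -- `D` is a derivation on `T(A,U)`:
    (hder : ∀ x y : A × U, D (trivMul l r x y) = trivMul l r x (D y) + trivMul l r (D x) y) :
    -- `D₁((a,u)) = (δ₁(a)+τ₁(u), τ₂(u))` is a derivation on `T(A,U)`,
    (∀ x y : A × U,
        (fun p : A × U => ((δ₁ p.1 + τ₁ p.2, τ₂ p.2) : A × U)) (trivMul l r x y)
          = trivMul l r x ((fun p : A × U => ((δ₁ p.1 + τ₁ p.2, τ₂ p.2) : A × U)) y)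
            + trivMul l r ((fun p : A × U => ((δ₁ p.1 + τ₁ p.2, τ₂ p.2) : A × U)) x) y) ∧
    -- `D₂((a,u)) = (0, δ₂(a))` is a derivation on `T(A,U)`,
    (∀ x y : A × U,
        (fun p : A × U => ((0, δ₂ p.1) : A × U)) (trivMul l r x y)
          = trivMul l r x ((fun p : A × U => ((0, δ₂ p.1) : A × U)) y)
            + trivMul l r ((fun p : A × U => ((0, δ₂ p.1) : A × U)) x) y) ∧
    -- and `D = D₁ + D₂`:
    (∀ p : A × U, D p = ((δ₁ p.1 + τ₁ p.2, τ₂ p.2) : A × U) + ((0, δ₂ p.1) : A × U)) :=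
  stmt2_general l r δ₁ δ₂ τ₁ τ₂ D hD hder
end

section
/- Let A be a Banach algebra and U a Banach A-bimodule. If every derivation on the module extension Banach algebra T(A,U) is continuous, then every derivation δ : A → U is continuous. -/
section TrivExtLift

variable {R A U : Type*} [Semiring R] [AddCommMonoid A] [Module R A] [AddCommMonoid U]
  [Module R U]

def trivExtLift (δ : A →ₗ[R] U) : (A × U) →ₗ[R] (A × U) :=
  (LinearMap.inr R A U).comp (δ.comp (LinearMap.fst R A U))

@[simp]
theorem trivExtLift_apply (δ : A →ₗ[R] U) (x : A × U) : trivExtLift δ x = (0, δ x.1) := rfl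

theorem continuous_of_continuous_trivExtLift [TopologicalSpace A] [TopologicalSpace U]
    {δ : A →ₗ[R] U} (h : Continuous (trivExtLift δ)) : Continuous δ :=
  (continuous_snd.comp h).comp (Continuous.prodMk_left (0 : U))

end TrivExtLift

theorem trivExtLift_trivMul {A U : Type*} [NonUnitalNormedRing A] [NormedSpace ℂ A]
    [NormedAddCommGroup U] [NormedSpace ℂ U] (l : A →L[ℂ] U →L[ℂ] U) (r : U →L[ℂ] A →L[ℂ] U)
    (δ : A →ₗ[ℂ] U) (hδ : ∀ a b : A, δ (a * b) = l a (δ b) + r (δ a) b) (x y : A × U) :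
    trivExtLift δ (trivMul l r x y) =
      trivMul l r x (trivExtLift δ y) + trivMul l r (trivExtLift δ x) y := by
  ext <;> simp [trivMul, hδ]

theorem stmt5_general
    {A U : Type*}
    [NonUnitalNormedRing A] [NormedSpace ℂ A]
    [NormedAddCommGroup U] [NormedSpace ℂ U]
    (l : A →L[ℂ] U →L[ℂ] U) (r : U →L[ℂ] A →L[ℂ] U)
    -- every derivation on `T(A,U)` is continuous:
    (hT : ∀ D : (A × U) →ₗ[ℂ] (A × U),
      (∀ x y : A × U, D (trivMul l r x y) = trivMul l r x (D y) + trivMul l r (D x) y) →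
        Continuous D) :
    -- every derivation `δ : A → U` is continuous:
    ∀ δ : A →ₗ[ℂ] U, (∀ a b : A, δ (a * b) = l a (δ b) + r (δ a) b) → Continuous δ :=
  fun δ hδ => continuous_of_continuous_trivExtLift (hT _ (trivExtLift_trivMul l r δ hδ))

theorem stmt5
    {A U : Type*}
    [NonUnitalNormedRing A] [NormedSpace ℂ A] [IsScalarTower ℂ A A] [SMulCommClass ℂ A A]
    [CompleteSpace A]
    [NormedAddCommGroup U] [NormedSpace ℂ U] [CompleteSpace U]
    (l : A →L[ℂ] U →L[ℂ] U) (r : U →L[ℂ] A →L[ℂ] U)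
    (hl : ∀ (a b : A) (u : U), l (a * b) u = l a (l b u))
    (hr : ∀ (u : U) (a b : A), r u (a * b) = r (r u a) b)
    (hlr : ∀ (a : A) (u : U) (b : A), r (l a u) b = l a (r u b))
    -- every derivation on `T(A,U)` is continuous:
    (hT : ∀ D : (A × U) →ₗ[ℂ] (A × U),
      (∀ x y : A × U, D (trivMul l r x y) = trivMul l r x (D y) + trivMul l r (D x) y) →
        Continuous D) :
    -- every derivation `δ : A → U` is continuous:
    ∀ δ : A →ₗ[ℂ] U, (∀ a b : A, δ (a * b) = l a (δ b) + r (δ a) b) → Continuous δ :=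
  stmt5_general l r hT
end

section
/- Let A be a Banach algebra and U a Banach A-bimodule. Suppose there exist A-bimodule homomorphisms φ : A → U and ψ : U → A (i.e. linear maps commuting with both module actions) such that φ ∘ ψ = id_U. If every derivation on the module extension Banach algebra T(A,U) is continuous, then every derivation on A is continuous. -/
section LiftDerivation

variable {A U : Type*} [NonUnitalNormedRing A] [NormedSpace ℂ A]
  [NormedAddCommGroup U] [NormedSpace ℂ U]
  {l : A →L[ℂ] U →L[ℂ] U} {r : U →L[ℂ] A →L[ℂ] U}
  {φ : A →ₗ[ℂ] U} {ψ : U →ₗ[ℂ] A} {δ : A →ₗ[ℂ] A}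

theorem conj_derivation_map_left (hφl : ∀ a b : A, φ (a * b) = l a (φ b))
    (hψl : ∀ (a : A) (u : U), ψ (l a u) = a * ψ u) (hφψ : ∀ u : U, φ (ψ u) = u)
    (hδ : ∀ a b : A, δ (a * b) = a * δ b + δ a * b) (a : A) (u : U) :
    φ (δ (ψ (l a u))) = l a (φ (δ (ψ u))) + l (δ a) u := by
  rw [hψl, hδ, map_add, hφl, hφl, hφψ]

theorem conj_derivation_map_right (hφr : ∀ a b : A, φ (b * a) = r (φ b) a)
    (hψr : ∀ (a : A) (u : U), ψ (r u a) = ψ u * a) (hφψ : ∀ u : U, φ (ψ u) = u)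
    (hδ : ∀ a b : A, δ (a * b) = a * δ b + δ a * b) (u : U) (a : A) :
    φ (δ (ψ (r u a))) = r u (δ a) + r (φ (δ (ψ u))) a := by
  rw [hψr, hδ, map_add, hφr, hφr, hφψ]

theorem prodMap_conj_derivation_trivMul (hφl : ∀ a b : A, φ (a * b) = l a (φ b))
    (hφr : ∀ a b : A, φ (b * a) = r (φ b) a)
    (hψl : ∀ (a : A) (u : U), ψ (l a u) = a * ψ u)
    (hψr : ∀ (a : A) (u : U), ψ (r u a) = ψ u * a) (hφψ : ∀ u : U, φ (ψ u) = u)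
    (hδ : ∀ a b : A, δ (a * b) = a * δ b + δ a * b) (x y : A × U) :
    δ.prodMap (φ ∘ₗ δ ∘ₗ ψ) (trivMul l r x y) =
      trivMul l r x (δ.prodMap (φ ∘ₗ δ ∘ₗ ψ) y) + trivMul l r (δ.prodMap (φ ∘ₗ δ ∘ₗ ψ) x) y := by
  obtain ⟨a, u⟩ := x
  obtain ⟨b, v⟩ := y
  ext
  · exact hδ a b
  · simp only [trivMul, LinearMap.prodMap_apply, LinearMap.comp_apply, Prod.snd_add, map_add,
      conj_derivation_map_left hφl hψl hφψ hδ, conj_derivation_map_right hφr hψr hφψ hδ]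
    abel

end LiftDerivation

theorem stmt7_general
    {A U : Type*}
    [NonUnitalNormedRing A] [NormedSpace ℂ A]
    [NormedAddCommGroup U] [NormedSpace ℂ U]
    (l : A →L[ℂ] U →L[ℂ] U) (r : U →L[ℂ] A →L[ℂ] U)
    -- `φ : A → U` is a linear `A`-bimodule homomorphism:
    (φ : A →ₗ[ℂ] U)
    (hφl : ∀ a b : A, φ (a * b) = l a (φ b))
    (hφr : ∀ a b : A, φ (b * a) = r (φ b) a)
    -- `ψ : U → A` is a linear `A`-bimodule homomorphism:
    (ψ : U →ₗ[ℂ] A)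
    (hψl : ∀ (a : A) (u : U), ψ (l a u) = a * ψ u)
    (hψr : ∀ (a : A) (u : U), ψ (r u a) = ψ u * a)
    -- `φ ∘ ψ = id_U`:
    (hφψ : ∀ u : U, φ (ψ u) = u)
    -- every derivation on `T(A,U)` is continuous:
    (hT : ∀ D : (A × U) →ₗ[ℂ] (A × U),
      (∀ x y : A × U, D (trivMul l r x y) = trivMul l r x (D y) + trivMul l r (D x) y) →
        Continuous D) :
    -- every derivation on `A` is continuous:
    ∀ δ : A →ₗ[ℂ] A, (∀ a b : A, δ (a * b) = a * δ b + δ a * b) → Continuous δ := by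
  intro δ hδ
  have hD := hT _ (prodMap_conj_derivation_trivMul hφl hφr hψl hψr hφψ hδ)
  rw [LinearMap.coe_prodMap] at hD
  exact (continuous_prodMap_iff.mp hD).1

theorem stmt7
    {A U : Type*}
    [NonUnitalNormedRing A] [NormedSpace ℂ A] [IsScalarTower ℂ A A] [SMulCommClass ℂ A A]
    [CompleteSpace A]
    [NormedAddCommGroup U] [NormedSpace ℂ U] [CompleteSpace U]
    (l : A →L[ℂ] U →L[ℂ] U) (r : U →L[ℂ] A →L[ℂ] U)
    (hl : ∀ (a b : A) (u : U), l (a * b) u = l a (l b u))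
    (hr : ∀ (u : U) (a b : A), r u (a * b) = r (r u a) b)
    (hlr : ∀ (a : A) (u : U) (b : A), r (l a u) b = l a (r u b))
    -- `φ : A → U` is a linear `A`-bimodule homomorphism:
    (φ : A →ₗ[ℂ] U)
    (hφl : ∀ a b : A, φ (a * b) = l a (φ b))
    (hφr : ∀ a b : A, φ (b * a) = r (φ b) a)
    -- `ψ : U → A` is a linear `A`-bimodule homomorphism:
    (ψ : U →ₗ[ℂ] A)
    (hψl : ∀ (a : A) (u : U), ψ (l a u) = a * ψ u)
    (hψr : ∀ (a : A) (u : U), ψ (r u a) = ψ u * a)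
    -- `φ ∘ ψ = id_U`:
    (hφψ : ∀ u : U, φ (ψ u) = u)
    -- every derivation on `T(A,U)` is continuous:
    (hT : ∀ D : (A × U) →ₗ[ℂ] (A × U),
      (∀ x y : A × U, D (trivMul l r x y) = trivMul l r x (D y) + trivMul l r (D x) y) →
        Continuous D) :
    -- every derivation on `A` is continuous:
    ∀ δ : A →ₗ[ℂ] A, (∀ a b : A, δ (a * b) = a * δ b + δ a * b) → Continuous δ :=
  stmt7_general l r φ hφl hφr ψ hψl hψr hφψ hT
end

section
/- Let A be a Banach algebra possessing a bounded right approximate identity and let I be a closed two-sided ideal of A, so that the quotient A/I is a Banach A-bimodule under the actions a·(b+I) = ab+I and (b+I)·a = ba+I. If every derivation on A is continuous and every derivation from A into A/I is continuous, then every derivation on the module extension Banach algebra T(A, A/I) is continuous. -/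
variable {A : Type*} [NonUnitalNormedRing A] [NormedSpace ℂ A]
  [IsScalarTower ℂ A A] [SMulCommClass ℂ A A]

/-- The left action of `A` on the quotient Banach `A`-bimodule `A ⧸ I`:
`a · (b + I) = a*b + I`.  Here `I` is a two-sided ideal of `A` which is a `ℂ`-submodule. -/
def lact (I : Submodule ℂ A) (hIl : ∀ (a : A), ∀ x ∈ I, a * x ∈ I) (a : A) :
    (A ⧸ I) →ₗ[ℂ] (A ⧸ I) :=
  Submodule.mapQ I I (LinearMap.mulLeft ℂ a) (fun x hx => hIl a x hx)

/-- The right action of `A` on the quotient Banach `A`-bimodule `A ⧸ I`: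
`(b + I) · a = b*a + I`. -/
def ract (I : Submodule ℂ A) (hIr : ∀ (a : A), ∀ x ∈ I, x * a ∈ I) (a : A) :
    (A ⧸ I) →ₗ[ℂ] (A ⧸ I) :=
  Submodule.mapQ I I (LinearMap.mulRight ℂ a) (fun x hx => hIr a x hx)

/-- Multiplication of the module extension (trivial extension) Banach algebra
`T(A, A/I) = A × (A ⧸ I)`: `(a,u)(b,v) = (ab, a·v + u·b)`.  The ℓ¹-norm on the product
induces the product topology. -/
def trivMulQ (I : Submodule ℂ A) (hIl : ∀ (a : A), ∀ x ∈ I, a * x ∈ I)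
    (hIr : ∀ (a : A), ∀ x ∈ I, x * a ∈ I) (x y : A × (A ⧸ I)) : A × (A ⧸ I) :=
  (x.1 * y.1, lact I hIl x.1 y.2 + ract I hIr y.1 x.2)


/-! Write a derivation `D` of `T(A, A/I)` as a matrix `[[δ, τ], [d, σ]]`. Then `δ` is a derivation
on `A` and `d` a derivation into `A/I`, so both are continuous by hypothesis. With `q : A → A/I`
the quotient map, `τ ∘ q` and `σ ∘ q - q ∘ δ` are bimodule maps, `φ (a * b) = a • φ b = φ a • b`,
and a bimodule map out of a Banach algebra with a right approximate identity has closed graph: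
if `uₙ → 0` and `φ uₙ → y`, then `y • b = lim uₙ • φ b = 0` for every `b`, so `y = lim y • e = 0`.
Since `q` is a quotient map, `τ` and `σ` are continuous as well. -/

open Filter Topology

theorem LinearMap.continuous_of_map_mul_left_right {𝕜 R M : Type*} [NontriviallyNormedField 𝕜]
    [NormedAddCommGroup R] [NormedSpace 𝕜 R] [CompleteSpace R] [Mul R]
    [NormedAddCommGroup M] [NormedSpace 𝕜 M] [CompleteSpace M]
    (l r : R → M → M) (hl : ∀ m, Continuous fun a => l a m) (hr : ∀ b, Continuous (r b))
    {F : Filter R} [F.NeBot] (hF : ∀ m, Tendsto (fun e => r e m) F (𝓝 m))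
    (φ : R →ₗ[𝕜] M) (hφl : ∀ a b, φ (a * b) = l a (φ b)) (hφr : ∀ a b, φ (a * b) = r b (φ a)) :
    Continuous φ := by
  refine φ.continuous_of_seq_closed_graph fun u x y hu hφu => ?_
  have hr_eq : ∀ b, r b y = r b (φ x) := fun b => by
    have h1 : Tendsto (fun n => r b (φ (u n))) atTop (𝓝 (r b y)) := ((hr b).tendsto y).comp hφu
    have h2 : Tendsto (fun n => l (u n) (φ b)) atTop (𝓝 (l x (φ b))) :=
      ((hl (φ b)).tendsto x).comp hu
    simp only [← hφl, hφr] at h2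
    exact tendsto_nhds_unique h1 h2
  exact tendsto_nhds_unique (hF y) (by simpa only [hr_eq] using hF (φ x))

theorem LinearMap.continuous_of_continuous_inl_inr {R M N P : Type*} [Semiring R]
    [AddCommMonoid M] [Module R M] [TopologicalSpace M] [AddCommMonoid N] [Module R N]
    [TopologicalSpace N] [AddCommMonoid P] [Module R P] [TopologicalSpace P] [ContinuousAdd P]
    (f : M × N →ₗ[R] P) (hM : Continuous fun m => f (m, 0)) (hN : Continuous fun n => f (0, n)) :
    Continuous f := by
  have hf : ⇑f = fun x => f (x.1, 0) + f (0, x.2) :=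
    funext fun x => by rw [← map_add, Prod.mk_add_mk, add_zero, zero_add]
  rw [hf]
  exact (hM.comp continuous_fst).add (hN.comp continuous_snd)

section QuotientBimodule

variable {B : Type*} [NonUnitalNormedRing B] [NormedSpace ℂ B] (I : Submodule ℂ B)

section Left

variable [SMulCommClass ℂ B B] (hIl : ∀ (a : B), ∀ x ∈ I, a * x ∈ I)

theorem lact_mkQ (a b : B) :
    lact I hIl a (I.mkQ b) = I.mkQ (a * b) := rfl

theorem lact_zero_apply (u : B ⧸ I) : lact I hIl 0 u = 0 := by
  obtain ⟨b, rfl⟩ := I.mkQ_surjective u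
  rw [lact_mkQ, zero_mul, map_zero]

theorem continuous_lact_apply (u : B ⧸ I) : Continuous fun a => lact I hIl a u := by
  obtain ⟨c, rfl⟩ := I.mkQ_surjective u
  exact I.continuous_mkQ.comp (continuous_mul_const c)

end Left

section Right

variable [IsScalarTower ℂ B B] (hIr : ∀ (a : B), ∀ x ∈ I, x * a ∈ I)

theorem ract_mkQ (a b : B) :
    ract I hIr a (I.mkQ b) = I.mkQ (b * a) := rfl

theorem ract_zero_apply (u : B ⧸ I) : ract I hIr 0 u = 0 := by
  obtain ⟨b, rfl⟩ := I.mkQ_surjective u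
  rw [ract_mkQ, mul_zero, map_zero]

theorem continuous_ract (b : B) : Continuous (ract I hIr b) :=
  I.isQuotientMap_mkQ.continuous_iff.2 (I.continuous_mkQ.comp (continuous_mul_const b))

theorem tendsto_ract {F : Filter B} (hF : ∀ a : B, Tendsto (fun e => a * e) F (𝓝 a))
    (u : B ⧸ I) : Tendsto (fun e => ract I hIr e u) F (𝓝 u) := by
  obtain ⟨c, rfl⟩ := I.mkQ_surjective u
  exact (I.continuous_mkQ.tendsto c).comp (hF c)

end Right

end QuotientBimodule

def IsDerivationTrivMulQ (I : Submodule ℂ A) (hIl : ∀ (a : A), ∀ x ∈ I, a * x ∈ I)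
    (hIr : ∀ (a : A), ∀ x ∈ I, x * a ∈ I) (D : (A × (A ⧸ I)) →ₗ[ℂ] (A × (A ⧸ I))) : Prop :=
  ∀ x y, D (trivMulQ I hIl hIr x y) = trivMulQ I hIl hIr x (D y) + trivMulQ I hIl hIr (D x) y

namespace IsDerivationTrivMulQ

variable {I : Submodule ℂ A} {hIl : ∀ (a : A), ∀ x ∈ I, a * x ∈ I}
  {hIr : ∀ (a : A), ∀ x ∈ I, x * a ∈ I} {D : (A × (A ⧸ I)) →ₗ[ℂ] (A × (A ⧸ I))}

theorem fst_map_inl_mul (hD : IsDerivationTrivMulQ I hIl hIr D) (a b : A) :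
    (D (a * b, 0)).1 = a * (D (b, 0)).1 + (D (a, 0)).1 * b := by
  simpa [trivMulQ] using congrArg Prod.fst (hD (a, 0) (b, 0))

theorem snd_map_inl_mul (hD : IsDerivationTrivMulQ I hIl hIr D) (a b : A) :
    (D (a * b, 0)).2 = lact I hIl a (D (b, 0)).2 + ract I hIr b (D (a, 0)).2 := by
  simpa [trivMulQ] using congrArg Prod.snd (hD (a, 0) (b, 0))

theorem fst_map_inr_lact (hD : IsDerivationTrivMulQ I hIl hIr D) (a : A) (v : A ⧸ I) :
    (D (0, lact I hIl a v)).1 = a * (D (0, v)).1 := by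
  simpa [trivMulQ, ract_zero_apply] using congrArg Prod.fst (hD (a, 0) (0, v))

theorem snd_map_inr_lact (hD : IsDerivationTrivMulQ I hIl hIr D) (a : A) (v : A ⧸ I) :
    (D (0, lact I hIl a v)).2 = lact I hIl a (D (0, v)).2 + lact I hIl (D (a, 0)).1 v := by
  simpa [trivMulQ, ract_zero_apply] using congrArg Prod.snd (hD (a, 0) (0, v))

theorem fst_map_inr_ract (hD : IsDerivationTrivMulQ I hIl hIr D) (u : A ⧸ I) (b : A) :
    (D (0, ract I hIr b u)).1 = (D (0, u)).1 * b := by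
  simpa [trivMulQ, lact_zero_apply] using congrArg Prod.fst (hD (0, u) (b, 0))

theorem snd_map_inr_ract (hD : IsDerivationTrivMulQ I hIl hIr D) (u : A ⧸ I) (b : A) :
    (D (0, ract I hIr b u)).2 = ract I hIr (D (b, 0)).1 u + ract I hIr b (D (0, u)).2 := by
  simpa [trivMulQ, lact_zero_apply, add_comm] using congrArg Prod.snd (hD (0, u) (b, 0))

theorem continuous_fst_map_inl (hD : IsDerivationTrivMulQ I hIl hIr D)
    (hdA : ∀ δ : A →ₗ[ℂ] A, (∀ a b : A, δ (a * b) = a * δ b + δ a * b) → Continuous δ) :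
    Continuous fun a : A => (D (a, 0)).1 :=
  hdA (LinearMap.fst ℂ A (A ⧸ I) ∘ₗ D ∘ₗ LinearMap.inl ℂ A (A ⧸ I)) hD.fst_map_inl_mul

theorem continuous_snd_map_inl (hD : IsDerivationTrivMulQ I hIl hIr D)
    (hdAI : ∀ δ : A →ₗ[ℂ] (A ⧸ I),
      (∀ a b : A, δ (a * b) = lact I hIl a (δ b) + ract I hIr b (δ a)) → Continuous δ) :
    Continuous fun a : A => (D (a, 0)).2 :=
  hdAI (LinearMap.snd ℂ A (A ⧸ I) ∘ₗ D ∘ₗ LinearMap.inl ℂ A (A ⧸ I)) hD.snd_map_inl_mul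

theorem continuous_fst_map_inr [CompleteSpace A]
    (hD : IsDerivationTrivMulQ I hIl hIr D) {F : Filter A} [F.NeBot]
    (hF : ∀ a : A, Tendsto (fun e => a * e) F (𝓝 a)) :
    Continuous fun u : A ⧸ I => (D (0, u)).1 := by
  refine I.isQuotientMap_mkQ.continuous_iff.2 ?_
  refine (LinearMap.fst ℂ A (A ⧸ I) ∘ₗ D ∘ₗ LinearMap.inr ℂ A (A ⧸ I) ∘ₗ I.mkQ
    ).continuous_of_map_mul_left_right (· * ·) (fun b a => a * b) continuous_mul_const
    continuous_mul_const hF (fun a b => hD.fst_map_inr_lact a (I.mkQ b))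
    (fun a b => hD.fst_map_inr_ract (I.mkQ a) b)

theorem continuous_snd_map_inr [CompleteSpace A] [IsClosed (I : Set A)]
    (hD : IsDerivationTrivMulQ I hIl hIr D) {F : Filter A} [F.NeBot]
    (hF : ∀ a : A, Tendsto (fun e => a * e) F (𝓝 a))
    (hδ : Continuous fun a : A => (D (a, 0)).1) :
    Continuous fun u : A ⧸ I => (D (0, u)).2 := by
  -- The `D (a, 0)`-terms in the Leibniz rules for `σ = (D (0, ·)).2` cancel against `q ∘ δ`.
  let Θ : A →ₗ[ℂ] A ⧸ I := LinearMap.snd ℂ A (A ⧸ I) ∘ₗ D ∘ₗ LinearMap.inr ℂ A (A ⧸ I) ∘ₗ I.mkQ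
    - I.mkQ ∘ₗ LinearMap.fst ℂ A (A ⧸ I) ∘ₗ D ∘ₗ LinearMap.inl ℂ A (A ⧸ I)
  have hΘl (a b : A) : Θ (a * b) = lact I hIl a (Θ b) := by
    change (D (0, lact I hIl a (I.mkQ b))).2 - I.mkQ (D (a * b, 0)).1
      = lact I hIl a ((D (0, I.mkQ b)).2 - I.mkQ (D (b, 0)).1)
    rw [hD.snd_map_inr_lact, hD.fst_map_inl_mul, map_sub, map_add, ← lact_mkQ I hIl,
      ← lact_mkQ I hIl]
    abel
  have hΘr (a b : A) : Θ (a * b) = ract I hIr b (Θ a) := by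
    change (D (0, ract I hIr b (I.mkQ a))).2 - I.mkQ (D (a * b, 0)).1
      = ract I hIr b ((D (0, I.mkQ a)).2 - I.mkQ (D (a, 0)).1)
    rw [hD.snd_map_inr_ract, hD.fst_map_inl_mul, map_sub, map_add, ← ract_mkQ I hIr,
      ← ract_mkQ I hIr]
    abel
  have hΘc : Continuous Θ := Θ.continuous_of_map_mul_left_right (fun a u => lact I hIl a u)
    (fun b u => ract I hIr b u)
    (continuous_lact_apply I hIl) (continuous_ract I hIr) (tendsto_ract I hIr hF) hΘl hΘr
  have hσ : (fun u : A ⧸ I => (D (0, u)).2) ∘ I.mkQ = Θ + I.mkQ ∘ fun a => (D (a, 0)).1 :=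
    funext fun a => (sub_add_cancel _ _).symm
  exact I.isQuotientMap_mkQ.continuous_iff.2 (hσ ▸ hΘc.add (I.continuous_mkQ.comp hδ))

end IsDerivationTrivMulQ

theorem stmt8 [CompleteSpace A]
    (I : Submodule ℂ A)
    (hIl : ∀ (a : A), ∀ x ∈ I, a * x ∈ I) (hIr : ∀ (a : A), ∀ x ∈ I, x * a ∈ I)
    (hIc : IsClosed (I : Set A))
    -- `A` has a bounded right approximate identity:
    (hbai : ∃ (C : ℝ) (F : Filter A), F.NeBot ∧ (∀ᶠ e in F, ‖e‖ ≤ C) ∧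
      ∀ a : A, Filter.Tendsto (fun e => a * e) F (nhds a))
    -- every derivation on `A` is continuous:
    (hdA : ∀ δ : A →ₗ[ℂ] A, (∀ a b : A, δ (a * b) = a * δ b + δ a * b) → Continuous δ)
    -- every derivation from `A` into `A ⧸ I` is continuous:
    (hdAI : ∀ δ : A →ₗ[ℂ] (A ⧸ I),
      (∀ a b : A, δ (a * b) = lact I hIl a (δ b) + ract I hIr b (δ a)) → Continuous δ) :
    -- every derivation on `T(A, A/I)` is continuous:
    ∀ D : (A × (A ⧸ I)) →ₗ[ℂ] (A × (A ⧸ I)),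
      (∀ x y : A × (A ⧸ I),
        D (trivMulQ I hIl hIr x y)
          = trivMulQ I hIl hIr x (D y) + trivMulQ I hIl hIr (D x) y) →
      Continuous D := by
  intro D (hD : IsDerivationTrivMulQ I hIl hIr D)
  obtain ⟨-, F, hF, -, hlim⟩ := hbai
  have : IsClosed (I : Set A) := hIc
  have hδ := hD.continuous_fst_map_inl hdA
  refine D.continuous_of_continuous_inl_inr ?_ ?_
  · exact hδ.prodMk (hD.continuous_snd_map_inl hdAI)
  · exact (hD.continuous_fst_map_inr hlim).prodMk (hD.continuous_snd_map_inr hlim hδ)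
end

section
/- Let A be a Banach algebra and I a closed two-sided ideal of A. If every derivation on the module extension Banach algebra T(A, A/I) is continuous, then every derivation δ : A → A satisfying δ(I) ⊆ I is continuous. -/
variable {A : Type*} [NonUnitalNormedRing A] [NormedSpace ℂ A]
  [IsScalarTower ℂ A A] [SMulCommClass ℂ A A]

/-! A derivation `δ` of `A` with `δ(I) ⊆ I` induces a linear map `δ̄` on `A ⧸ I`, and `δ × δ̄` is a
derivation of `T(A, A ⧸ I)`. Its continuity gives that of `δ`, its restriction to `A × {0}`. -/

section QuotientDerivation

variable (I : Submodule ℂ A) {δ : A →ₗ[ℂ] A}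

omit [IsScalarTower ℂ A A] in
theorem mapQ_lact (hd : ∀ a b : A, δ (a * b) = a * δ b + δ a * b) (hδI : ∀ x ∈ I, δ x ∈ I)
    (hIl : ∀ (a : A), ∀ x ∈ I, a * x ∈ I) (a : A) (u : A ⧸ I) :
    I.mapQ I δ hδI (lact I hIl a u) = lact I hIl a (I.mapQ I δ hδI u) + lact I hIl (δ a) u := by
  obtain ⟨w, rfl⟩ := Submodule.Quotient.mk_surjective I u
  exact (congrArg _ (hd a w)).trans (Submodule.Quotient.mk_add I)

omit [SMulCommClass ℂ A A] in
theorem mapQ_ract (hd : ∀ a b : A, δ (a * b) = a * δ b + δ a * b) (hδI : ∀ x ∈ I, δ x ∈ I)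
    (hIr : ∀ (a : A), ∀ x ∈ I, x * a ∈ I) (b : A) (u : A ⧸ I) :
    I.mapQ I δ hδI (ract I hIr b u) = ract I hIr (δ b) u + ract I hIr b (I.mapQ I δ hδI u) := by
  obtain ⟨w, rfl⟩ := Submodule.Quotient.mk_surjective I u
  exact (congrArg _ (hd w b)).trans (Submodule.Quotient.mk_add I)

theorem prodMap_mapQ_trivMulQ (hd : ∀ a b : A, δ (a * b) = a * δ b + δ a * b)
    (hδI : ∀ x ∈ I, δ x ∈ I) (hIl : ∀ (a : A), ∀ x ∈ I, a * x ∈ I)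
    (hIr : ∀ (a : A), ∀ x ∈ I, x * a ∈ I) (x y : A × (A ⧸ I)) :
    δ.prodMap (I.mapQ I δ hδI) (trivMulQ I hIl hIr x y)
      = trivMulQ I hIl hIr x (δ.prodMap (I.mapQ I δ hδI) y)
        + trivMulQ I hIl hIr (δ.prodMap (I.mapQ I δ hδI) x) y := by
  refine Prod.ext (hd x.1 y.1) ?_
  simp only [trivMulQ, LinearMap.prodMap_apply, Prod.snd_add, map_add,
    mapQ_lact I hd hδI, mapQ_ract I hd hδI]
  abel

end QuotientDerivation

theorem LinearMap.continuous_of_continuous_prodMap {R M N M' N' : Type*} [Semiring R]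
    [TopologicalSpace M] [AddCommMonoid M] [Module R M] [TopologicalSpace N] [AddCommMonoid N]
    [Module R N] [TopologicalSpace M'] [AddCommMonoid M'] [Module R M']
    [TopologicalSpace N'] [AddCommMonoid N'] [Module R N']
    {f : M →ₗ[R] M'} {g : N →ₗ[R] N'} (h : Continuous (f.prodMap g)) : Continuous f :=
  continuous_fst.comp (h.comp (continuous_id.prodMk (continuous_const (y := (0 : N)))))

theorem stmt10_general
    (I : Submodule ℂ A)
    (hIl : ∀ (a : A), ∀ x ∈ I, a * x ∈ I) (hIr : ∀ (a : A), ∀ x ∈ I, x * a ∈ I)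
    -- every derivation on `T(A, A/I)` is continuous:
    (hT : ∀ D : (A × (A ⧸ I)) →ₗ[ℂ] (A × (A ⧸ I)),
      (∀ x y : A × (A ⧸ I),
        D (trivMulQ I hIl hIr x y)
          = trivMulQ I hIl hIr x (D y) + trivMulQ I hIl hIr (D x) y) →
      Continuous D) :
    -- every derivation `δ : A → A` with `δ(I) ⊆ I` is continuous:
    ∀ δ : A →ₗ[ℂ] A,
      (∀ a b : A, δ (a * b) = a * δ b + δ a * b) → (∀ x ∈ I, δ x ∈ I) → Continuous δ :=
  fun _ hd hδI => LinearMap.continuous_of_continuous_prodMap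
    (hT _ (prodMap_mapQ_trivMulQ I hd hδI hIl hIr))

theorem stmt10 [CompleteSpace A]
    (I : Submodule ℂ A)
    (hIl : ∀ (a : A), ∀ x ∈ I, a * x ∈ I) (hIr : ∀ (a : A), ∀ x ∈ I, x * a ∈ I)
    (hIc : IsClosed (I : Set A))
    -- every derivation on `T(A, A/I)` is continuous:
    (hT : ∀ D : (A × (A ⧸ I)) →ₗ[ℂ] (A × (A ⧸ I)),
      (∀ x y : A × (A ⧸ I),
        D (trivMulQ I hIl hIr x y)
          = trivMulQ I hIl hIr x (D y) + trivMulQ I hIl hIr (D x) y) →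
      Continuous D) :
    -- every derivation `δ : A → A` with `δ(I) ⊆ I` is continuous:
    ∀ δ : A →ₗ[ℂ] A,
      (∀ a b : A, δ (a * b) = a * δ b + δ a * b) → (∀ x ∈ I, δ x ∈ I) → Continuous δ :=
  stmt10_general I hIl hIr hT
end

section
/- Let A be a Banach algebra having a bounded right (or left) approximate identity. If every derivation on A is continuous, then every derivation on the module extension Banach algebra T(A, A) (where A is regarded as a Banach A-bimodule over itself via multiplication) is continuous. -/
open Filter in
/-- A two-sided `A`-module map on a Banach algebra with a (bounded) one-sided approximate
identity is automatically continuous, by the closed graph theorem. -/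
lemma bimodMap_continuous_aux {A : Type*}
    [NonUnitalNormedRing A] [NormedSpace ℂ A] [CompleteSpace A]
    (hbai : (∃ (C : ℝ) (F : Filter A), F.NeBot ∧ (∀ᶠ e in F, ‖e‖ ≤ C) ∧
               ∀ a : A, Filter.Tendsto (fun e => a * e) F (nhds a)) ∨
            (∃ (C : ℝ) (F : Filter A), F.NeBot ∧ (∀ᶠ e in F, ‖e‖ ≤ C) ∧
               ∀ a : A, Filter.Tendsto (fun e => e * a) F (nhds a)))
    (ψ : A →ₗ[ℂ] A) (h1 : ∀ a b : A, ψ (a * b) = a * ψ b)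
    (h2 : ∀ a b : A, ψ (a * b) = ψ a * b) : Continuous ψ := by
  apply ψ.continuous_of_isClosed_graph
  rw [← isSeqClosed_iff_isClosed]
  intro x p hx hxp
  simp only [SetLike.mem_coe, LinearMap.mem_graph_iff] at hx ⊢
  have hx1 : Tendsto (fun n => (x n).1) atTop (nhds p.1) :=
    (continuous_fst.tendsto p).comp hxp
  have hx2 : Tendsto (fun n => (x n).2) atTop (nhds p.2) :=
    (continuous_snd.tendsto p).comp hxp
  set d := p.2 - ψ p.1 with hd
  have key1 : ∀ b : A, d * b = 0 := by
    intro b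
    have t1 : Tendsto (fun n => (x n).2 * b) atTop (nhds (p.2 * b)) :=
      hx2.mul tendsto_const_nhds
    have t2 : Tendsto (fun n => (x n).2 * b) atTop (nhds (ψ p.1 * b)) := by
      have : (fun n => (x n).2 * b) = fun n => (x n).1 * ψ b := by
        funext n
        rw [hx n, ← h2, h1]
      rw [this, ← h2, h1]
      exact hx1.mul tendsto_const_nhds
    have := tendsto_nhds_unique t1 t2
    rw [hd, sub_mul, this, sub_self]
  have key2 : ∀ b : A, b * d = 0 := by
    intro b
    have t1 : Tendsto (fun n => b * (x n).2) atTop (nhds (b * p.2)) :=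
      tendsto_const_nhds.mul hx2
    have t2 : Tendsto (fun n => b * (x n).2) atTop (nhds (b * ψ p.1)) := by
      have : (fun n => b * (x n).2) = fun n => ψ b * (x n).1 := by
        funext n
        rw [hx n, ← h1, h2]
      rw [this, ← h1, h2]
      exact tendsto_const_nhds.mul hx1
    have := tendsto_nhds_unique t1 t2
    rw [hd, mul_sub, this, sub_self]
  have hd0 : d = 0 := by
    rcases hbai with ⟨C, F, hne, -, hlim⟩ | ⟨C, F, hne, -, hlim⟩
    · have h0 : Tendsto (fun e => d * e) F (nhds 0) := by
        simp only [funext key1]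
        exact tendsto_const_nhds
      exact tendsto_nhds_unique (hlim d) h0
    · have h0 : Tendsto (fun e => e * d) F (nhds 0) := by
        simp only [funext key2]
        exact tendsto_const_nhds
      exact tendsto_nhds_unique (hlim d) h0
  rw [← sub_eq_zero]
  exact hd0

/-- Multiplication of the module extension (trivial extension) Banach algebra
`T(A, A) = A × A`, where the Banach algebra `A` is regarded as a Banach `A`-bimodule over
itself via multiplication: `(a,u)(b,v) = (ab, av + ub)`.  The ℓ¹-norm on the product induces
the product topology. -/
def trivMulA {A : Type*} [NonUnitalNormedRing A] (x y : A × A) : A × A :=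
  (x.1 * y.1, x.1 * y.2 + x.2 * y.1)

theorem stmt11 {A : Type*}
    [NonUnitalNormedRing A] [NormedSpace ℂ A] [IsScalarTower ℂ A A] [SMulCommClass ℂ A A]
    [CompleteSpace A]
    -- `A` has a bounded right, or a bounded left, approximate identity:
    (hbai : (∃ (C : ℝ) (F : Filter A), F.NeBot ∧ (∀ᶠ e in F, ‖e‖ ≤ C) ∧
               ∀ a : A, Filter.Tendsto (fun e => a * e) F (nhds a)) ∨
            (∃ (C : ℝ) (F : Filter A), F.NeBot ∧ (∀ᶠ e in F, ‖e‖ ≤ C) ∧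
               ∀ a : A, Filter.Tendsto (fun e => e * a) F (nhds a)))
    -- every derivation on `A` is continuous:
    (hdA : ∀ δ : A →ₗ[ℂ] A, (∀ a b : A, δ (a * b) = a * δ b + δ a * b) → Continuous δ) :
    -- every derivation on `T(A, A)` is continuous:
    ∀ D : (A × A) →ₗ[ℂ] (A × A),
      (∀ x y : A × A, D (trivMulA x y) = trivMulA x (D y) + trivMulA (D x) y) →
      Continuous D := by
  intro D hD
  simp only [trivMulA] at hD
  have bim := bimodMap_continuous_aux hbai
  set τ : A →ₗ[ℂ] A := (LinearMap.fst ℂ A A).comp (D.comp (LinearMap.inl ℂ A A)) with hτdef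
  set δ : A →ₗ[ℂ] A := (LinearMap.snd ℂ A A).comp (D.comp (LinearMap.inl ℂ A A)) with hδdef
  set σ : A →ₗ[ℂ] A := (LinearMap.fst ℂ A A).comp (D.comp (LinearMap.inr ℂ A A)) with hσdef
  set ρ : A →ₗ[ℂ] A := (LinearMap.snd ℂ A A).comp (D.comp (LinearMap.inr ℂ A A)) with hρdef
  have hτa : ∀ a : A, τ a = (D (a, 0)).1 := fun a => rfl
  have hδa : ∀ a : A, δ a = (D (a, 0)).2 := fun a => rfl
  have hσa : ∀ u : A, σ u = (D (0, u)).1 := fun u => rfl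
  have hρa : ∀ u : A, ρ u = (D (0, u)).2 := fun u => rfl
  -- identities from (a,0)(b,0)
  have e11 : ∀ a b : A, τ (a * b) = a * τ b + τ a * b := by
    intro a b
    have h := hD (a, 0) (b, 0)
    simp only [mul_zero, zero_mul, add_zero, zero_add] at h
    have := congrArg Prod.fst h
    simpa [hτa, Prod.fst_add] using this
  have e12 : ∀ a b : A, δ (a * b) = a * δ b + δ a * b := by
    intro a b
    have h := hD (a, 0) (b, 0)
    simp only [mul_zero, zero_mul, add_zero, zero_add] at h
    have := congrArg Prod.snd h
    simpa [hδa, Prod.snd_add] using this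
  -- identities from (a,0)(0,v)
  have e21 : ∀ a v : A, σ (a * v) = a * σ v := by
    intro a v
    have h := hD (a, 0) (0, v)
    simp only [mul_zero, zero_mul, add_zero, zero_add] at h
    have := congrArg Prod.fst h
    simpa [hσa, hτa, Prod.fst_add] using this
  have e22 : ∀ a v : A, ρ (a * v) = a * ρ v + τ a * v := by
    intro a v
    have h := hD (a, 0) (0, v)
    simp only [mul_zero, zero_mul, add_zero, zero_add] at h
    have := congrArg Prod.snd h
    simpa [hρa, hτa, Prod.snd_add] using this
  -- identities from (0,u)(b,0)
  have e31 : ∀ u b : A, σ (u * b) = σ u * b := by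
    intro u b
    have h := hD (0, u) (b, 0)
    simp only [mul_zero, zero_mul, add_zero, zero_add] at h
    have := congrArg Prod.fst h
    simpa [hσa, hτa, Prod.fst_add] using this
  have e32 : ∀ u b : A, ρ (u * b) = u * τ b + ρ u * b := by
    intro u b
    have h := hD (0, u) (b, 0)
    simp only [mul_zero, zero_mul, add_zero, zero_add] at h
    have := congrArg Prod.snd h
    simpa [hρa, hτa, Prod.snd_add] using this
  -- continuity of the four blocks
  have hτc : Continuous τ := hdA τ e11
  have hδc : Continuous δ := hdA δ e12
  have hσc : Continuous σ := bim σ e21 e31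
  have hψc : Continuous (ρ - τ) := by
    apply bim (ρ - τ)
    · intro a b
      simp only [LinearMap.sub_apply]
      rw [e22, e11, mul_sub]
      abel
    · intro a b
      simp only [LinearMap.sub_apply]
      rw [e32, e11, sub_mul]
      abel
  have hρc : Continuous ρ := by
    have : ⇑ρ = fun a => (ρ - τ) a + τ a := by
      funext a; simp
    rw [this]
    exact hψc.add hτc
  -- assemble
  have hDeq : ⇑D = fun x : A × A => (τ x.1 + σ x.2, δ x.1 + ρ x.2) := by
    funext x
    have hx : (x : A × A) = (x.1, 0) + (0, x.2) := by ext <;> simp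
    calc D x = D (x.1, 0) + D (0, x.2) := by rw [← map_add, ← hx]
    _ = (τ x.1, δ x.1) + (σ x.2, ρ x.2) := by rw [hτa, hδa, hσa, hρa]
    _ = (τ x.1 + σ x.2, δ x.1 + ρ x.2) := rfl
  rw [hDeq]
  exact ((hτc.comp continuous_fst).add (hσc.comp continuous_snd)).prodMk
    ((hδc.comp continuous_fst).add (hρc.comp continuous_snd))
end

section
/- Let A be a Banach algebra. If every derivation on the module extension Banach algebra T(A, A) (where A is regarded as a Banach A-bimodule over itself via multiplication) is continuous, then every derivation on A is continuous. -/
theorem stmt12 {A : Type*}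
    [NonUnitalNormedRing A] [NormedSpace ℂ A] [IsScalarTower ℂ A A] [SMulCommClass ℂ A A]
    [CompleteSpace A]
    -- every derivation on `T(A, A)` is continuous:
    (hT : ∀ D : (A × A) →ₗ[ℂ] (A × A),
      (∀ x y : A × A, D (trivMulA x y) = trivMulA x (D y) + trivMulA (D x) y) →
      Continuous D) :
    -- every derivation on `A` is continuous:
    ∀ δ : A →ₗ[ℂ] A, (∀ a b : A, δ (a * b) = a * δ b + δ a * b) → Continuous δ := by
  intro δ hδ
  set D : (A × A) →ₗ[ℂ] (A × A) :=
    (LinearMap.inr ℂ A A).comp (δ.comp (LinearMap.fst ℂ A A)) with hD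
  have hder : ∀ x y : A × A, D (trivMulA x y) = trivMulA x (D y) + trivMulA (D x) y := by
    intro x y
    simp [hD, trivMulA, hδ, Prod.ext_iff]
  have hcont : Continuous D := hT D hder
  have : Continuous fun a : A => (D (a, 0)).2 := by
    exact (continuous_snd.comp (hcont.comp (continuous_id.prodMk continuous_const)))
  exact this
end

section
/- Let A be a prime Banach algebra (i.e. for a, b ∈ A, if a x b = 0 for all x ∈ A then a = 0 or b = 0) containing a nonzero idempotent p (p² = p, p ≠ 0) such that the left ideal A·p = { a p : a ∈ A } is finite dimensional. Then every derivation on A is continuous. -/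
/-!
Primeness makes the left regular representation of `A` on the left ideal `A p` faithful:
if `a * (x * p) = 0` for all `x` then `a = 0`, since `p ≠ 0`. Hence `A` embeds linearly into
the endomorphisms of the finite-dimensional space `A p`, so `A` itself is finite dimensional,
and every linear map on a finite-dimensional normed space is continuous.
-/

theorem span_setOf_eq_mul_eq_range_mulRight {R A : Type*} [CommSemiring R]
    [NonUnitalNonAssocSemiring A] [Module R A] [IsScalarTower R A A] (p : A) :
    Submodule.span R {x : A | ∃ a : A, x = a * p} = LinearMap.range (LinearMap.mulRight R p) := by
  rw [← Submodule.span_eq (LinearMap.range (LinearMap.mulRight R p))]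
  congr 1
  ext x
  simp [eq_comm]

def mulLeftOnRangeMulRight {R A : Type*} [CommSemiring R] [NonUnitalSemiring A] [Module R A]
    [IsScalarTower R A A] [SMulCommClass R A A] (p : A) :
    A →ₗ[R] Module.End R (LinearMap.range (LinearMap.mulRight R p)) where
  toFun a := (LinearMap.mulLeft R a).restrict fun _ ⟨b, hb⟩ => ⟨a * b, by simp [← hb, mul_assoc]⟩
  map_add' a b := by ext; exact add_mul a b _
  map_smul' c a := by ext; exact smul_mul_assoc c a _

theorem mulLeftOnRangeMulRight_injective {R A : Type*} [CommSemiring R] [NonUnitalRing A]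
    [Module R A] [IsScalarTower R A A] [SMulCommClass R A A] {p : A}
    (hprime : ∀ a b : A, (∀ x : A, a * x * b = 0) → a = 0 ∨ b = 0) (hp0 : p ≠ 0) :
    Function.Injective (mulLeftOnRangeMulRight (R := R) p) := by
  refine (injective_iff_map_eq_zero _).2 fun a ha => ?_
  refine (hprime a p fun x => ?_).resolve_right hp0
  have := congrArg Subtype.val (LinearMap.congr_fun ha ⟨x * p, x, rfl⟩)
  exact (mul_assoc a x p).trans this

theorem FiniteDimensional.of_prime_of_finiteDimensional_span_mul_right {K A : Type*} [Field K]
    [NonUnitalRing A] [Module K A] [IsScalarTower K A A] [SMulCommClass K A A]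
    (hprime : ∀ a b : A, (∀ x : A, a * x * b = 0) → a = 0 ∨ b = 0) {p : A} (hp0 : p ≠ 0)
    (hfin : FiniteDimensional K (Submodule.span K {x : A | ∃ a : A, x = a * p})) :
    FiniteDimensional K A := by
  rw [span_setOf_eq_mul_eq_range_mulRight] at hfin
  exact .of_injective _ (mulLeftOnRangeMulRight_injective hprime hp0)

theorem stmt14_general {A : Type*}
    [NonUnitalNormedRing A] [NormedSpace ℂ A] [IsScalarTower ℂ A A] [SMulCommClass ℂ A A]
    -- `A` is prime:
    (hprime : ∀ a b : A, (∀ x : A, a * x * b = 0) → a = 0 ∨ b = 0)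
    -- `p` is a nonzero idempotent:
    (p : A) (hp0 : p ≠ 0)
    -- the left ideal `A·p = {a*p : a ∈ A}` is finite dimensional (it is a `ℂ`-subspace,
    -- hence equal to its span):
    (hfin : FiniteDimensional ℂ (Submodule.span ℂ {x : A | ∃ a : A, x = a * p})) :
    -- every derivation on `A` is continuous:
    ∀ δ : A →ₗ[ℂ] A, (∀ a b : A, δ (a * b) = a * δ b + δ a * b) → Continuous δ := by
  intro δ _
  have := FiniteDimensional.of_prime_of_finiteDimensional_span_mul_right hprime hp0 hfin
  exact δ.continuous_of_finiteDimensional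

theorem stmt14 {A : Type*}
    [NonUnitalNormedRing A] [NormedSpace ℂ A] [IsScalarTower ℂ A A] [SMulCommClass ℂ A A]
    [CompleteSpace A]
    -- `A` is prime:
    (hprime : ∀ a b : A, (∀ x : A, a * x * b = 0) → a = 0 ∨ b = 0)
    -- `p` is a nonzero idempotent:
    (p : A) (hp : p * p = p) (hp0 : p ≠ 0)
    -- the left ideal `A·p = {a*p : a ∈ A}` is finite dimensional (it is a `ℂ`-subspace,
    -- hence equal to its span):
    (hfin : FiniteDimensional ℂ (Submodule.span ℂ {x : A | ∃ a : A, x = a * p})) :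
    -- every derivation on `A` is continuous:
    ∀ δ : A →ₗ[ℂ] A, (∀ a b : A, δ (a * b) = a * δ b + δ a * b) → Continuous δ :=
  stmt14_general hprime p hp0 hfin
end
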